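/- Let n ≥ 1 and let M be the n-state Meyer–Fischer automaton over {a,b}. Then the language accepted by M is exactly the set of words w ∈ {a,b}* admitting a decomposition w = x ++ y where x is either the empty word or ends with the letter b, and the number of occurrences of the letter a in y is congruent to 0 modulo n. -/

import Mathlib

/-- The two-letter alphabet `{a, b}`. -/
inductive AB : Type
  | a : AB
  | b : AB
deriving DecidableEq

instance : Fintype AB where
  elems := {AB.a, AB.b}
  complete := by intro x; cases x <;> simp

/-- The `n`-state Meyer–Fischer automaton: states `{1, …, n}` are represented by `Fin n`
(`q : Fin n` stands for the state `q.val + 1`).  Transitions: `i —a→ i+1` for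
`1 ≤ i ≤ n-1`, `n —a→ 1`, a `b`-self-loop `i —b→ i` for every `i`, and a reset
transition `i —b→ 1` for every `i`.  Start state = accepting state = `1`. -/
def mfNFA (n : ℕ) : NFA AB (Fin n) where
  step q x :=
    { p | (x = AB.a ∧ p.val = (q.val + 1) % n) ∨
          (x = AB.b ∧ (p = q ∨ p.val = 0)) }
  start := { q | q.val = 0 }
  accept := { q | q.val = 0 }

lemma mf_eval_mem (n : ℕ) (hn : 1 ≤ n) :
    ∀ w : List AB, ∀ q : Fin n,
      q ∈ (mfNFA n).evalFrom (mfNFA n).start w ↔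
        ∃ x y : List AB, w = x ++ y ∧
          (x = [] ∨ ∃ x' : List AB, x = x' ++ [AB.b]) ∧
          List.count AB.a y % n = q.val := by
  intro w
  induction w using List.reverseRecOn with
  | nil =>
    intro q
    simp only [NFA.evalFrom_nil]
    constructor
    · intro hq
      exact ⟨[], [], rfl, Or.inl rfl, by simpa [mfNFA] using hq.symm⟩
    · rintro ⟨x, y, hxy, -, hc⟩
      obtain ⟨rfl, rfl⟩ : x = [] ∧ y = [] := by
        simpa using List.append_eq_nil_iff.mp hxy.symm
      simpa [mfNFA] using hc.symm
  | append_singleton w c ih =>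
    intro q
    rw [NFA.evalFrom_append, NFA.evalFrom_singleton, NFA.mem_stepSet]
    have hne : ((mfNFA n).evalFrom (mfNFA n).start w).Nonempty := by
      refine ⟨⟨List.count AB.a w % n, Nat.mod_lt _ hn⟩, ?_⟩
      rw [ih]
      exact ⟨[], w, by simp, Or.inl rfl, rfl⟩
    constructor
    · rintro ⟨p, hp, hstep⟩
      rw [ih] at hp
      obtain ⟨x, y, rfl, hx, hc⟩ := hp
      rcases hstep with ⟨hca, hq⟩ | ⟨hcb, hq⟩
      · subst hca
        refine ⟨x, y ++ [AB.a], by simp, hx, ?_⟩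
        have h1 : List.count AB.a (y ++ [AB.a]) = List.count AB.a y + 1 := by simp
        have h2 : List.count AB.a y ≡ (p : ℕ) [MOD n] := by
          rw [← hc]; exact (Nat.mod_modEq _ _).symm
        rw [h1, (h2.add_right 1), hq]
      · subst hcb
        rcases hq with rfl | hq0
        · exact ⟨x, y ++ [AB.b], by simp, hx, by simpa using hc⟩
        · exact ⟨x ++ y ++ [AB.b], [], by simp, Or.inr ⟨x ++ y, rfl⟩,
            by simpa using hq0.symm⟩
    · rintro ⟨x, y, hxy, hx, hc⟩
      rcases y.eq_nil_or_concat with rfl | ⟨y', d, rfl⟩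
      · -- y = [], so x = w ++ [c], x ends in b (x nonempty), q.val = 0
        simp only [List.append_nil] at hxy
        subst hxy
        rcases hx with h | ⟨x', hx'⟩
        · exact absurd h (by simp)
        · have hcb : c = AB.b := by
            have := congrArg (List.getLast? ·) hx'
            simpa using this
          obtain ⟨p, hp⟩ := hne
          refine ⟨p, hp, Or.inr ⟨hcb, Or.inr ?_⟩⟩
          simpa using hc.symm
      · -- y = y' ++ [d]; then d = c and w = x ++ y'
        rw [List.concat_eq_append, ← List.append_assoc] at hxy
        obtain ⟨hw, hd⟩ : w = x ++ y' ∧ c = d := by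
          have h1 := List.append_inj' hxy rfl
          exact ⟨h1.1, by simpa using h1.2⟩
        subst hd hw
        rw [List.concat_eq_append] at hc
        cases c with
        | a =>
          have hcnt : List.count AB.a (y' ++ [AB.a]) = List.count AB.a y' + 1 := by simp
          rw [hcnt] at hc
          refine ⟨⟨List.count AB.a y' % n, Nat.mod_lt _ hn⟩, ?_, Or.inl ⟨rfl, ?_⟩⟩
          · rw [ih]; exact ⟨x, y', rfl, hx, rfl⟩
          · have h2 : List.count AB.a y' ≡ List.count AB.a y' % n [MOD n] :=
              (Nat.mod_modEq _ _).symm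
            rw [← hc]
            exact (h2.add_right 1)
        | b =>
          have hcnt : List.count AB.a (y' ++ [AB.b]) = List.count AB.a y' := by simp
          rw [hcnt] at hc
          refine ⟨q, ?_, Or.inr ⟨rfl, Or.inl rfl⟩⟩
          rw [ih]; exact ⟨x, y', rfl, hx, hc⟩

/-- the language accepted by the `n`-state Meyer–Fischer automaton
(`n ≥ 1`) is exactly the set of words `w = x ++ y` over `{a,b}` where `x` is empty or
ends with `b`, and the number of `a`'s in `y` is `≡ 0 (mod n)`. -/
theorem meyer_fischer_language (n : ℕ) (hn : 1 ≤ n) :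
    ∀ w : List AB, w ∈ (mfNFA n).accepts ↔
      ∃ x y : List AB, w = x ++ y ∧
        (x = [] ∨ ∃ x' : List AB, x = x' ++ [AB.b]) ∧
        List.count AB.a y % n = 0 := by
  intro w
  rw [NFA.mem_accepts]
  constructor
  · rintro ⟨q, hq, heval⟩
    rw [mf_eval_mem n hn] at heval
    obtain ⟨x, y, hxy, hx, hc⟩ := heval
    exact ⟨x, y, hxy, hx, by rw [hc]; exact hq⟩
  · rintro ⟨x, y, hxy, hx, hc⟩
    refine ⟨⟨0, hn⟩, rfl, ?_⟩
    rw [mf_eval_mem n hn]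
    exact ⟨x, y, hxy, hx, hc⟩
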